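/- Let f be α-strongly convex and L-smooth with 0 < α < L, let γ, μ, β > 0, let X ⊆ E be nonempty and closed, and let x̄ ∈ E and r_max > 0 be such that ι̂_μ is convex on closedBall(x̄, r_max). Define T_μ as the Douglas–Rachford operator of the penalized problem. Set κ := max{(γL − 1)/(γL + 1), (1 − γα)/(γα + 1)} and κ' := (1 + κ)/2. Then κ' ∈ (0, 1) and for all z₁, z₂ ∈ B(x̄, r_max) one has ‖T_μ(z₁) − T_μ(z₂)‖ ≤ κ'·‖z₁ − z₂‖. -/

import Mathlib

/-!
Optimality of `p = prox_{γf}(z)` gives `z = p + γ ∇f(p)`. Writing `u = p₁ - p₂` and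
`v = γ (∇f(p₁) - ∇f(p₂))`, the increments of `z` and of the reflected resolvent `2 prox_{γf} - I`
are `u + v` and `u - v`. Strong convexity and smoothness of `f` give Nesterov's inequality
`⟪v - γα u, v - γL u⟫ ≤ 0` (Baillon–Haddad cocoercivity of `f - (α/2)‖·‖²`), and the Cayley
transform `t ↦ (1 - t)/(1 + t)` turns it into `‖u - v‖ ≤ κ ‖u + v‖`. Since `ι̂_μ` is convex on the
ball, its constrained proximal map `q` is firmly nonexpansive, so `2q - I` is nonexpansive.
Finally `T_μ = (I + (2q - I) ∘ (2 prox_{γf} - I)) / 2` is `(1 + κ)/2`-Lipschitz.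
-/

open Set Filter Topology
open scoped RealInnerProductSpace

theorem ConvexOn.add_fderiv_sub_le {F : Type*} [NormedAddCommGroup F] [NormedSpace ℝ F]
    {s : Set F} {g : F → ℝ} {g' : F →L[ℝ] ℝ} {x y : F}
    (hg : ConvexOn ℝ s g) (hx : x ∈ s) (hy : y ∈ s) (hd : HasFDerivAt g g' x) :
    g x + g' (y - x) ≤ g y := by
  set ℓ : ℝ →ᵃ[ℝ] F := AffineMap.lineMap x y
  have hline := hg.comp_affineMap ℓ
  have hℓ0 : ℓ 0 = x := AffineMap.lineMap_apply_zero x y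
  have hℓ1 : ℓ 1 = y := AffineMap.lineMap_apply_one x y
  have hderiv : HasDerivAt (g ∘ ℓ) (g' (y - x)) 0 :=
    (hℓ0 ▸ hd).comp_hasDerivAt 0 AffineMap.hasDerivAt_lineMap
  have hslope := hline.le_slope_of_hasDerivAt (x := 0) (y := 1)
    (by simpa [hℓ0] using hx) (by simpa [hℓ1] using hy) one_pos hderiv
  simp only [slope_def_field, Function.comp_apply, hℓ0, hℓ1] at hslope
  linarith

theorem abs_max_div_lt_one {a b : ℝ} (ha : 0 < a) (hb : 0 < b) :
    |max ((b - 1) / (b + 1)) ((1 - a) / (a + 1))| < 1 := by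
  refine abs_lt.mpr ⟨lt_max_of_lt_right ?_, max_lt ?_ ?_⟩
  · rw [lt_div_iff₀ (by linarith)]; linarith
  · rw [div_lt_one (by linarith)]; linarith
  · rw [div_lt_one (by linarith)]; linarith

section InnerProductSpace

variable {E : Type*} [NormedAddCommGroup E] [InnerProductSpace ℝ E]

theorem norm_two_smul_sub_sub_le_of_norm_sq_le_inner {u₁ u₂ w₁ w₂ : E}
    (h : ‖u₁ - u₂‖ ^ 2 ≤ ⟪w₁ - w₂, u₁ - u₂⟫) :
    ‖((2 : ℝ) • u₁ - w₁) - ((2 : ℝ) • u₂ - w₂)‖ ≤ ‖w₁ - w₂‖ := by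
  have he : ((2 : ℝ) • u₁ - w₁) - ((2 : ℝ) • u₂ - w₂) = (2 : ℝ) • (u₁ - u₂) - (w₁ - w₂) := by
    module
  refine (sq_le_sq₀ (norm_nonneg _) (norm_nonneg _)).mp ?_
  rw [he, norm_sub_sq_real, real_inner_smul_left, norm_smul, mul_pow, Real.norm_two,
    real_inner_comm]
  linarith

theorem norm_le_max_mul_norm_of_inner_sub_smul_nonpos {d s : E} {k₁ k₂ : ℝ} (hk : k₁ ≤ k₂)
    (h : ⟪d - k₁ • s, d - k₂ • s⟫ ≤ 0) : ‖d‖ ≤ max (-k₁) k₂ * ‖s‖ := by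
  -- `d` lies in the closed ball with diameter `[k₁ • s, k₂ • s]`
  set m := (k₁ + k₂) / 2 with hm
  set ρ := (k₂ - k₁) / 2 with hρ
  have hρ₀ : 0 ≤ ρ := by linarith
  have hball : ‖d - m • s‖ ≤ ρ * ‖s‖ := by
    refine (sq_le_sq₀ (norm_nonneg _) (by positivity)).mp ?_
    have e : ⟪d - k₁ • s, d - k₂ • s⟫ = ‖d - m • s‖ ^ 2 - (ρ * ‖s‖) ^ 2 := by
      simp only [inner_sub_left, inner_sub_right, real_inner_smul_left, real_inner_smul_right,
        norm_sub_sq_real, norm_smul, real_inner_self_eq_norm_sq, real_inner_comm d s,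
        Real.norm_eq_abs, mul_pow, sq_abs, m, ρ]
      ring
    linarith
  have hmρ : |m| + ρ ≤ max (-k₁) k₂ := by
    have := abs_le.mpr (⟨by linarith [le_max_left (-k₁) k₂], by linarith [le_max_right (-k₁) k₂]⟩ :
      -(max (-k₁) k₂ - ρ) ≤ m ∧ m ≤ max (-k₁) k₂ - ρ)
    linarith
  calc ‖d‖ = ‖(d - m • s) + m • s‖ := by rw [sub_add_cancel]
    _ ≤ ‖d - m • s‖ + |m| * ‖s‖ := by rw [← Real.norm_eq_abs, ← norm_smul]; exact norm_add_le _ _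
    _ ≤ (|m| + ρ) * ‖s‖ := by linarith
    _ ≤ max (-k₁) k₂ * ‖s‖ := by gcongr

theorem norm_sub_le_max_mul_norm_add_of_inner_sub_smul_nonpos {u v : E} {a b : ℝ}
    (ha : -1 < a) (hab : a ≤ b) (h : ⟪v - a • u, v - b • u⟫ ≤ 0) :
    ‖u - v‖ ≤ max ((b - 1) / (b + 1)) ((1 - a) / (a + 1)) * ‖u + v‖ := by
  have ha1 : 0 < a + 1 := by linarith
  have hb1 : 0 < b + 1 := by linarith
  -- Cayley transform `t ↦ (1 - t)/(1 + t)`: from the pair `(u, v)` to `(u - v, u + v)`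
  have hcayley : ∀ t : ℝ, 0 < t + 1 →
      (u - v) - ((1 - t) / (t + 1)) • (u + v) = (-2 / (t + 1)) • (v - t • u) := by
    intro t ht
    rw [smul_sub, smul_add, smul_smul]
    match_scalars <;> field_simp <;> ring
  have hk : (1 - b) / (b + 1) ≤ (1 - a) / (a + 1) := by
    rw [div_le_div_iff₀ hb1 ha1]; nlinarith
  have key := norm_le_max_mul_norm_of_inner_sub_smul_nonpos hk (d := u - v) (s := u + v) (by
    rw [hcayley a ha1, hcayley b hb1, real_inner_smul_left, real_inner_smul_right]
    have : 0 ≤ -2 / (a + 1) * (-2 / (b + 1)) := by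
      rw [neg_div, neg_div, neg_mul_neg]; positivity
    rw [real_inner_comm] at h
    nlinarith [mul_nonneg this (neg_nonneg.mpr h)])
  rwa [← neg_div, neg_sub] at key

theorem norm_sub_sq_le_mul_inner_of_quadratic_bounds {φ : E → ℝ} {G : E → E} {c : ℝ}
    (hc : 0 < c) (hlow : ∀ x y, φ x + ⟪G x, y - x⟫ ≤ φ y)
    (hup : ∀ x y, φ y ≤ φ x + ⟪G x, y - x⟫ + c / 2 * ‖y - x‖ ^ 2) (x y : E) :
    ‖G x - G y‖ ^ 2 ≤ c * ⟪G x - G y, x - y⟫ := by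
  -- compare `φ` at `y` and at the gradient step `y - c⁻¹ • (G y - G x)`
  have key : ∀ x y, φ x + ⟪G x, y - x⟫ + ‖G y - G x‖ ^ 2 / (2 * c) ≤ φ y := by
    intro x y
    set w := G y - G x
    have h1 := hlow x (y - c⁻¹ • w)
    have h2 := hup y (y - c⁻¹ • w)
    have hw : ⟪G y, w⟫ - ⟪G x, w⟫ = ‖w‖ ^ 2 := by
      rw [← inner_sub_left, real_inner_self_eq_norm_sq]
    rw [sub_sub_cancel_left, norm_neg, norm_smul, inner_neg_right, real_inner_smul_right,
      Real.norm_of_nonneg (inv_nonneg.mpr hc.le)] at h2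
    rw [sub_right_comm, inner_sub_right, real_inner_smul_right] at h1
    have hc' : c / 2 * (c⁻¹ * ‖w‖) ^ 2 = c⁻¹ * ‖w‖ ^ 2 - ‖w‖ ^ 2 / (2 * c) := by
      field_simp; ring
    have hw' : c⁻¹ * ⟪G y, w⟫ - c⁻¹ * ⟪G x, w⟫ = c⁻¹ * ‖w‖ ^ 2 := by rw [← mul_sub, hw]
    linarith
  have k1 := key x y
  have k2 := key y x
  have hsym : ⟪G x, y - x⟫ + ⟪G y, x - y⟫ = -⟪G x - G y, x - y⟫ := by
    rw [inner_sub_left, ← neg_sub x y, inner_neg_right]; ring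
  rw [norm_sub_rev] at k1
  have : ‖G x - G y‖ ^ 2 / c ≤ ⟪G x - G y, x - y⟫ := by
    have : ‖G x - G y‖ ^ 2 / c = ‖G x - G y‖ ^ 2 / (2 * c) + ‖G x - G y‖ ^ 2 / (2 * c) := by
      field_simp; ring
    linarith
  rwa [div_le_iff₀ hc, mul_comm] at this

theorem inner_sub_smul_sub_smul_nonpos_of_quadratic_bounds {f : E → ℝ} {G : E → E} {α L : ℝ}
    (hαL : α < L) (hlow : ∀ x y, f x + ⟪G x, y - x⟫ + α / 2 * ‖y - x‖ ^ 2 ≤ f y)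
    (hup : ∀ x y, f y ≤ f x + ⟪G x, y - x⟫ + L / 2 * ‖y - x‖ ^ 2) (x y : E) :
    ⟪G x - G y - α • (x - y), G x - G y - L • (x - y)⟫ ≤ 0 := by
  have hexp : ∀ x y : E, ‖y‖ ^ 2 = ‖x‖ ^ 2 + 2 * ⟪x, y - x⟫ + ‖y - x‖ ^ 2 := fun x y => by
    simpa using norm_add_sq_real x (y - x)
  -- `f - (α/2)‖·‖²` is convex and `(L - α)`-smooth
  have hco := norm_sub_sq_le_mul_inner_of_quadratic_bounds (φ := fun y => f y - α / 2 * ‖y‖ ^ 2)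
    (G := fun y => G y - α • y) (sub_pos.mpr hαL)
    (fun x y => by
      simp only [inner_sub_left, real_inner_smul_left]
      rw [hexp x y]
      linarith [hlow x y])
    (fun x y => by
      simp only [inner_sub_left, real_inner_smul_left]
      rw [hexp x y]
      linarith [hup x y]) x y
  have hw : G x - α • x - (G y - α • y) = G x - G y - α • (x - y) := by module
  have hL : G x - G y - L • (x - y) = (G x - G y - α • (x - y)) - (L - α) • (x - y) := by module
  simp only [hw] at hco
  rw [hL, inner_sub_right, real_inner_smul_right, real_inner_self_eq_norm_sq]
  linarith

theorem ConvexOn.inner_sub_le_of_isMinOn_add_norm_sub_sq {s : Set E} {φ : E → ℝ} {γ : ℝ}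
    {w u y : E} (hφ : ConvexOn ℝ s φ) (hγ : 0 < γ) (hu : u ∈ s) (hy : y ∈ s)
    (hmin : IsMinOn (fun v => φ v + 1 / (2 * γ) * ‖v - w‖ ^ 2) s u) :
    ⟪w - u, y - u⟫ ≤ γ * (φ y - φ u) := by
  have hsmall : ∀ t ∈ Ioc (0 : ℝ) 1,
      ⟪w - u, y - u⟫ ≤ γ * (φ y - φ u) + t / 2 * ‖y - u‖ ^ 2 := by
    rintro t ⟨ht0, ht1⟩
    have hseg : (1 - t) • u + t • y = u + t • (y - u) := by module
    have hmem : u + t • (y - u) ∈ s := hseg ▸ hφ.1 hu hy (by linarith) ht0.le (by ring)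
    have hconv : φ (u + t • (y - u)) ≤ (1 - t) * φ u + t * φ y := by
      simpa [hseg] using hφ.2 hu hy (by linarith : (0 : ℝ) ≤ 1 - t) ht0.le (by ring)
    have hmin' := isMinOn_iff.mp hmin _ hmem
    have hexp : ‖u + t • (y - u) - w‖ ^ 2
        = ‖u - w‖ ^ 2 - 2 * t * ⟪w - u, y - u⟫ + t ^ 2 * ‖y - u‖ ^ 2 := by
      rw [show u + t • (y - u) - w = (u - w) + t • (y - u) by abel, norm_add_sq_real,
        real_inner_smul_right, norm_smul, mul_pow, Real.norm_eq_abs, sq_abs, ← neg_sub w u,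
        inner_neg_left]
      ring
    have hfac : 0 ≤ t / (2 * γ) *
        (2 * γ * (φ y - φ u) + t * ‖y - u‖ ^ 2 - 2 * ⟪w - u, y - u⟫) := by
      have e : t / (2 * γ) * (2 * γ * (φ y - φ u) + t * ‖y - u‖ ^ 2 - 2 * ⟪w - u, y - u⟫)
          = ((1 - t) * φ u + t * φ y + 1 / (2 * γ) * ‖u + t • (y - u) - w‖ ^ 2)
            - (φ u + 1 / (2 * γ) * ‖u - w‖ ^ 2) := by
        rw [hexp]; field_simp; ring
      rw [e]
      linarith
    have := (mul_nonneg_iff_of_pos_left (by positivity : 0 < t / (2 * γ))).mp hfac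
    linarith
  have hlim : Tendsto (fun t : ℝ => γ * (φ y - φ u) + t / 2 * ‖y - u‖ ^ 2) (𝓝[>] 0)
      (𝓝 (γ * (φ y - φ u))) := by
    refine tendsto_nhdsWithin_of_tendsto_nhds ?_
    simpa using ((continuous_id.div_const 2).mul_const (‖y - u‖ ^ 2)).const_add
      (γ * (φ y - φ u)) |>.tendsto 0
  exact ge_of_tendsto hlim <| by
    filter_upwards [Ioc_mem_nhdsGT one_pos] with t ht using hsmall t ht

theorem ConvexOn.norm_sub_sq_le_inner_of_isMinOn_add_norm_sub_sq {s : Set E} {φ : E → ℝ}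
    {γ : ℝ} {w₁ w₂ u₁ u₂ : E} (hφ : ConvexOn ℝ s φ) (hγ : 0 < γ)
    (hu₁ : u₁ ∈ s) (hmin₁ : IsMinOn (fun v => φ v + 1 / (2 * γ) * ‖v - w₁‖ ^ 2) s u₁)
    (hu₂ : u₂ ∈ s) (hmin₂ : IsMinOn (fun v => φ v + 1 / (2 * γ) * ‖v - w₂‖ ^ 2) s u₂) :
    ‖u₁ - u₂‖ ^ 2 ≤ ⟪w₁ - w₂, u₁ - u₂⟫ := by
  have h₁ := hφ.inner_sub_le_of_isMinOn_add_norm_sub_sq hγ hu₁ hu₂ hmin₁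
  have h₂ := hφ.inner_sub_le_of_isMinOn_add_norm_sub_sq hγ hu₂ hu₁ hmin₂
  have e : ⟪w₁ - u₁, u₂ - u₁⟫ + ⟪w₂ - u₂, u₁ - u₂⟫ = ‖u₁ - u₂‖ ^ 2 - ⟪w₁ - w₂, u₁ - u₂⟫ := by
    rw [← neg_sub u₁ u₂, inner_neg_right, ← real_inner_self_eq_norm_sq]
    simp only [inner_sub_left]
    ring
  linarith

variable [CompleteSpace E]

theorem add_inner_add_sq_le_of_convexOn_sub {f : E → ℝ} {g x : E} {α : ℝ}
    (hsc : ConvexOn ℝ univ (fun y => f y - α / 2 * ‖y‖ ^ 2)) (hf : HasGradientAt f g x) (y : E) :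
    f x + ⟪g, y - x⟫ + α / 2 * ‖y - x‖ ^ 2 ≤ f y := by
  have hd := hf.hasFDerivAt.sub (((hasStrictFDerivAt_norm_sq x).hasFDerivAt).const_mul (α / 2))
  have := hsc.add_fderiv_sub_le (mem_univ x) (mem_univ y) hd
  have hexp : ‖y‖ ^ 2 = ‖x‖ ^ 2 + 2 * ⟪x, y - x⟫ + ‖y - x‖ ^ 2 := by
    simpa using norm_add_sq_real x (y - x)
  simp only [sub_apply, InnerProductSpace.toDual_apply_apply,
    smul_apply, innerSL_apply_apply, nsmul_eq_mul, smul_eq_mul] at this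
  rw [hexp] at this
  linarith

theorem le_add_inner_add_sq_of_lipschitz_gradient {f : E → ℝ} {G : E → E} {L : ℝ}
    (hG : ∀ x, HasGradientAt f (G x) x) (hlip : ∀ x y, ‖G x - G y‖ ≤ L * ‖x - y‖) (x y : E) :
    f y ≤ f x + ⟪G x, y - x⟫ + L / 2 * ‖y - x‖ ^ 2 := by
  set ψ : ℝ → ℝ := fun t => f (AffineMap.lineMap x y t) - t * ⟪G x, y - x⟫
    - L / 2 * t ^ 2 * ‖y - x‖ ^ 2
  have hψ : ∀ t, HasDerivAt ψ (⟪G (AffineMap.lineMap x y t), y - x⟫ - ⟪G x, y - x⟫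
      - L * t * ‖y - x‖ ^ 2) t := by
    intro t
    have h1 := (hG (AffineMap.lineMap x y t)).hasFDerivAt.comp_hasDerivAt t
      AffineMap.hasDerivAt_lineMap
    have h2 := (hasDerivAt_id t).mul_const ⟪G x, y - x⟫
    have h3 := ((hasDerivAt_pow 2 t).const_mul (L / 2)).mul_const (‖y - x‖ ^ 2)
    refine ((h1.sub h2).sub h3).congr_deriv ?_
    simp only [InnerProductSpace.toDual_apply_apply]
    ring
  have hanti : AntitoneOn ψ (Icc 0 1) := by
    refine antitoneOn_of_hasDerivWithinAt_nonpos (convex_Icc 0 1)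
      (fun t _ => (hψ t).continuousAt.continuousWithinAt) (fun t _ => (hψ t).hasDerivWithinAt) ?_
    intro t ht
    rw [interior_Icc] at ht
    have hseg : AffineMap.lineMap x y t - x = t • (y - x) := by
      rw [AffineMap.lineMap_apply_module']; abel
    have hcs := real_inner_le_norm (G (AffineMap.lineMap x y t) - G x) (y - x)
    have hL := hlip (AffineMap.lineMap x y t) x
    rw [hseg, norm_smul, Real.norm_of_nonneg ht.1.le] at hL
    rw [← inner_sub_left]
    nlinarith [norm_nonneg (y - x)]
  have := hanti (left_mem_Icc.mpr zero_le_one) (right_mem_Icc.mpr zero_le_one) zero_le_one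
  simp only [ψ, AffineMap.lineMap_apply_zero, AffineMap.lineMap_apply_one] at this
  linarith

theorem eq_add_smul_of_isMinOn_add_norm_sub_sq {f : E → ℝ} {g p z : E}
    {γ : ℝ} (hγ : γ ≠ 0) (hmin : IsMinOn (fun y => f y + 1 / (2 * γ) * ‖y - z‖ ^ 2) univ p)
    (hf : HasGradientAt f g p) :
    z = p + γ • g := by
  have hgrad : HasGradientAt (fun y => f y + 1 / (2 * γ) * ‖y - z‖ ^ 2)
      (g + γ⁻¹ • (p - z)) p := by
    rw [hasGradientAt_iff_hasFDerivAt]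
    refine (hf.hasFDerivAt.add
      (((hasFDerivAt_id p).sub_const z).norm_sq.const_mul (1 / (2 * γ)))).congr_fderiv ?_
    ext v
    simp only [add_apply, smul_apply,
      ContinuousLinearMap.comp_apply, InnerProductSpace.toDual_apply_apply, innerSL_apply_apply,
      map_add, map_smul, inner_sub_left, smul_eq_mul, nsmul_eq_mul, id_eq,
      ContinuousLinearMap.id_apply]
    ring
  have hzero : g + γ⁻¹ • (p - z) = 0 := by
    have := (hmin.isLocalMin univ_mem).hasFDerivAt_eq_zero hgrad.hasFDerivAt
    rwa [LinearIsometryEquiv.map_eq_zero_iff] at this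
  have := congrArg (γ • ·) hzero
  simp only [smul_add, smul_smul, mul_inv_cancel₀ hγ, one_smul, smul_zero] at this
  linear_combination (norm := module) -this

theorem norm_reflected_prox_sub_le {f : E → ℝ} {f' : E → E} {α L γ : ℝ} (hα : 0 < α)
    (hαL : α < L) (hγ : 0 < γ) (hsc : ConvexOn ℝ univ (fun y => f y - α / 2 * ‖y‖ ^ 2))
    (hgrad : ∀ x, HasGradientAt f (f' x) x) (hlip : ∀ x y, ‖f' x - f' y‖ ≤ L * ‖x - y‖)
    {prox : E → E}
    (hprox : ∀ z, IsMinOn (fun y => f y + 1 / (2 * γ) * ‖y - z‖ ^ 2) univ (prox z)) (z₁ z₂ : E) :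
    ‖((2 : ℝ) • prox z₁ - z₁) - ((2 : ℝ) • prox z₂ - z₂)‖ ≤
      max ((γ * L - 1) / (γ * L + 1)) ((1 - γ * α) / (γ * α + 1)) * ‖z₁ - z₂‖ := by
  have hz : ∀ z, z = prox z + γ • f' (prox z) := fun z =>
    eq_add_smul_of_isMinOn_add_norm_sub_sq hγ.ne' (hprox z) (hgrad _)
  set u := prox z₁ - prox z₂
  set v := f' (prox z₁) - f' (prox z₂)
  have hsum : z₁ - z₂ = u + γ • v := by
    nth_rw 1 [hz z₁, hz z₂]; module
  have hdiff : ((2 : ℝ) • prox z₁ - z₁) - ((2 : ℝ) • prox z₂ - z₂) = u - γ • v := by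
    nth_rw 2 [hz z₁, hz z₂]; module
  have hmono : ⟪v - α • u, v - L • u⟫ ≤ 0 :=
    inner_sub_smul_sub_smul_nonpos_of_quadratic_bounds hαL
      (fun x y => add_inner_add_sq_le_of_convexOn_sub hsc (hgrad x) y)
      (le_add_inner_add_sq_of_lipschitz_gradient hgrad hlip) (prox z₁) (prox z₂)
  have hscaled : ⟪γ • v - (γ * α) • u, γ • v - (γ * L) • u⟫ ≤ 0 := by
    rw [mul_smul, mul_smul, ← smul_sub, ← smul_sub, real_inner_smul_left, real_inner_smul_right,
      ← mul_assoc]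
    exact mul_nonpos_of_nonneg_of_nonpos (by positivity) hmono
  rw [hsum, hdiff]
  exact norm_sub_le_max_mul_norm_add_of_inner_sub_smul_nonpos (by linarith [mul_pos hγ hα])
    (mul_le_mul_of_nonneg_left hαL.le hγ.le) hscaled

end InnerProductSpace

theorem nexos_DRS_operator_contractive
    {E : Type*} [NormedAddCommGroup E] [InnerProductSpace ℝ E] [FiniteDimensional ℝ E]
    (X : Set E)
    (f : E → ℝ) (f' : E → E) (α L β γ μ : ℝ)
    (hα : 0 < α) (hαL : α < L)
    (hsc : ConvexOn ℝ Set.univ (fun y => f y - α / 2 * ‖y‖ ^ 2))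
    (hgrad : ∀ x, HasGradientAt f (f' x) x)
    (hlip : ∀ x y, ‖f' x - f' y‖ ≤ L * ‖x - y‖)
    (hγ : 0 < γ)
    (xbar : E) (rmax : ℝ)
    -- `ι̂_μ` is convex on the closed ball
    (hpenconv : ConvexOn ℝ (Metric.closedBall xbar rmax)
      (fun y => (Metric.infDist y X) ^ 2 / (2 * μ) + β / 2 * ‖y‖ ^ 2))
    -- `proxf z` is the unique minimizer of `y ↦ f(y) + (1/(2γ))‖y − z‖²` over `E`
    (proxf : E → E)
    (hproxf : ∀ z : E,
      IsMinOn (fun y => f y + 1 / (2 * γ) * ‖y - z‖ ^ 2) Set.univ (proxf z))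
    -- `q w` is the unique minimizer of `y ↦ ι̂_μ(y) + (1/(2γ))‖y − w‖²` over the closed ball
    (q : E → E)
    (hq : ∀ w : E, q w ∈ Metric.closedBall xbar rmax ∧
      IsMinOn (fun y => (Metric.infDist y X) ^ 2 / (2 * μ) + β / 2 * ‖y‖ ^ 2
          + 1 / (2 * γ) * ‖y - w‖ ^ 2) (Metric.closedBall xbar rmax) (q w)) :
    (0 < (1 + max ((γ * L - 1) / (γ * L + 1)) ((1 - γ * α) / (γ * α + 1))) / 2 ∧
      (1 + max ((γ * L - 1) / (γ * L + 1)) ((1 - γ * α) / (γ * α + 1))) / 2 < 1) ∧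
    ∀ z₁ ∈ Metric.ball xbar rmax, ∀ z₂ ∈ Metric.ball xbar rmax,
      ‖(q ((2 : ℝ) • proxf z₁ - z₁) + z₁ - proxf z₁)
          - (q ((2 : ℝ) • proxf z₂ - z₂) + z₂ - proxf z₂)‖ ≤
        (1 + max ((γ * L - 1) / (γ * L + 1)) ((1 - γ * α) / (γ * α + 1))) / 2 * ‖z₁ - z₂‖ := by
  set κ := max ((γ * L - 1) / (γ * L + 1)) ((1 - γ * α) / (γ * α + 1))
  obtain ⟨hκ₀, hκ₁⟩ := abs_lt.mp (abs_max_div_lt_one (mul_pos hγ hα) (mul_pos hγ (hα.trans hαL)))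
  refine ⟨⟨by linarith, by linarith⟩, fun z₁ _ z₂ _ => ?_⟩
  set w₁ := (2 : ℝ) • proxf z₁ - z₁
  set w₂ := (2 : ℝ) • proxf z₂ - z₂
  have hf : ‖w₁ - w₂‖ ≤ κ * ‖z₁ - z₂‖ :=
    norm_reflected_prox_sub_le hα hαL hγ hsc hgrad hlip hproxf z₁ z₂
  have hpen : ‖((2 : ℝ) • q w₁ - w₁) - ((2 : ℝ) • q w₂ - w₂)‖ ≤ ‖w₁ - w₂‖ :=
    norm_two_smul_sub_sub_le_of_norm_sq_le_inner
      (hpenconv.norm_sub_sq_le_inner_of_isMinOn_add_norm_sub_sq hγ (hq w₁).1 (hq w₁).2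
        (hq w₂).1 (hq w₂).2)
  calc ‖(q w₁ + z₁ - proxf z₁) - (q w₂ + z₂ - proxf z₂)‖
      = ‖(2⁻¹ : ℝ) • ((z₁ - z₂) + (((2 : ℝ) • q w₁ - w₁) - ((2 : ℝ) • q w₂ - w₂)))‖ := by
        congr 1; simp only [w₁, w₂]; module
    _ ≤ 2⁻¹ * (‖z₁ - z₂‖ + ‖((2 : ℝ) • q w₁ - w₁) - ((2 : ℝ) • q w₂ - w₂)‖) := by
        rw [norm_smul, Real.norm_of_nonneg (by norm_num)]
        gcongr
        exact norm_add_le _ _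
    _ ≤ (1 + κ) / 2 * ‖z₁ - z₂‖ := by linarith
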